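/- arXiv:1804.02711 — 2 statements merged into one kernel-verified Lean document; each statement's English description precedes it below -/
import Mathlib

section
/- A symmetric r × r polynomial matrix P(x) in variables x = (x_1, ..., x_n) is an SOS matrix if and only if the scalar polynomial y^T P(x) y, viewed as a polynomial in the n + r variables (x_1, ..., x_n, y_1, ..., y_r), is a sum of squares of polynomials. -/
/-!
Grade polynomials in `(x, y)` by their degree in `y`, i.e. by the weight `Sum.elim 0 1`.
Over an ordered ring a sum of squares of polynomials vanishes only if every term does, so
neither the top-degree parts nor the degree-0 parts of the `fᵢ` can cancel in `∑ fᵢ²`.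
Hence if `∑ fᵢ² = yᵀ P y`, which is homogeneous of degree 2, every `fᵢ` is homogeneous of
degree 1, and Euler's identity writes it as `fᵢ = ∑ⱼ yⱼ Mᵢⱼ(x)` with `Mᵢⱼ = ∂fᵢ/∂yⱼ`. Then
`yᵀ P y = yᵀ (MᵀM) y`, and a symmetric matrix is determined by its quadratic form because
`∂²(yᵀ P y)/∂yᵢ∂yⱼ = Pᵢⱼ + Pⱼᵢ`.
-/

namespace MvPolynomial

open scoped Matrix

open Finsupp

section WeightedComponents

variable {σ R : Type*} [CommSemiring R] (w : σ → ℕ)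

theorem coeff_eq_zero_of_weightedTotalDegree_lt {f : MvPolynomial σ R} {d : σ →₀ ℕ}
    (hd : weightedTotalDegree w f < weight w d) : coeff d f = 0 :=
  notMem_support_iff.mp fun h => absurd hd (not_lt.mpr (le_weightedTotalDegree w h))

theorem weightedHomogeneousComponent_weightedTotalDegree_ne_zero {f : MvPolynomial σ R}
    (hf : f ≠ 0) : weightedHomogeneousComponent w (weightedTotalDegree w f) f ≠ 0 := by
  obtain ⟨d, hd, hdeg⟩ :=
    Finset.exists_mem_eq_sup f.support (support_nonempty.mpr hf) (weight w)
  have hdeg' : weight w d = weightedTotalDegree w f := hdeg.symm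
  intro h
  have hcoeff := congrArg (coeff d) h
  rw [coeff_weightedHomogeneousComponent, if_pos hdeg', coeff_zero] at hcoeff
  exact mem_support_iff.mp hd hcoeff

theorem weightedHomogeneousComponent_add_mul_of_weightedTotalDegree_le
    {f g : MvPolynomial σ R} {p q : ℕ}
    (hf : weightedTotalDegree w f ≤ p) (hg : weightedTotalDegree w g ≤ q) :
    weightedHomogeneousComponent w (p + q) (f * g) =
      weightedHomogeneousComponent w p f * weightedHomogeneousComponent w q g := by
  classical
  ext d
  rw [coeff_weightedHomogeneousComponent]
  split_ifs with hd
  · rw [coeff_mul, coeff_mul]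
    refine Finset.sum_congr rfl fun x hx => ?_
    rw [← Finset.HasAntidiagonal.mem_antidiagonal.mp hx, map_add] at hd
    simp only [coeff_weightedHomogeneousComponent]
    rcases trichotomy_of_add_eq_add hd with h | h | h
    · rw [if_pos h.1, if_pos h.2]
    · rw [if_neg h.ne, zero_mul, coeff_eq_zero_of_weightedTotalDegree_lt w (hg.trans_lt (by omega)),
        mul_zero]
    · rw [if_neg h.ne, mul_zero,
        coeff_eq_zero_of_weightedTotalDegree_lt w (hf.trans_lt (by omega)), zero_mul]
  · exact (((weightedHomogeneousComponent_isWeightedHomogeneous p f).mul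
      (weightedHomogeneousComponent_isWeightedHomogeneous q g)).coeff_eq_zero d hd).symm

theorem weightedHomogeneousComponent_zero_mul (f g : MvPolynomial σ R) :
    weightedHomogeneousComponent w 0 (f * g) =
      weightedHomogeneousComponent w 0 f * weightedHomogeneousComponent w 0 g := by
  classical
  ext d
  rw [coeff_weightedHomogeneousComponent]
  split_ifs with hd
  · rw [coeff_mul, coeff_mul]
    refine Finset.sum_congr rfl fun x hx => ?_
    rw [← Finset.HasAntidiagonal.mem_antidiagonal.mp hx, map_add, Nat.add_eq_zero_iff] at hd
    simp only [coeff_weightedHomogeneousComponent, if_pos hd.1, if_pos hd.2]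
  · exact (((weightedHomogeneousComponent_isWeightedHomogeneous 0 f).mul
      (weightedHomogeneousComponent_isWeightedHomogeneous 0 g)).coeff_eq_zero d hd).symm

end WeightedComponents

section SumsOfSquares

variable {σ ι R : Type*} [CommRing R] [LinearOrder R] [IsStrictOrderedRing R] [Fintype ι]
  {f : ι → MvPolynomial σ R}

theorem eq_zero_of_sum_sq_eq_zero (h : ∑ i, f i ^ 2 = 0) (i : ι) : f i = 0 := by
  refine funext fun x => ?_
  have hx : ∑ j, eval x (f j) ^ 2 = 0 := by simpa using congrArg (eval x) h
  simpa using (Finset.sum_eq_zero_iff_of_nonneg fun j _ => sq_nonneg _).mp hx i (Finset.mem_univ i)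

variable (w : σ → ℕ)

theorem weightedTotalDegree_le_of_isWeightedHomogeneous_sum_sq {m : ℕ}
    (h : IsWeightedHomogeneous w (∑ i, f i ^ 2) (m + m)) (i : ι) :
    weightedTotalDegree w (f i) ≤ m := by
  set D := Finset.univ.sup fun j => weightedTotalDegree w (f j)
  have hle (j : ι) : weightedTotalDegree w (f j) ≤ D :=
    Finset.le_sup (f := fun j => weightedTotalDegree w (f j)) (Finset.mem_univ j)
  by_contra! hi
  have hD : m < D := hi.trans_le (hle i)
  obtain ⟨j, -, hj⟩ := Finset.exists_mem_eq_sup Finset.univ ⟨i, Finset.mem_univ i⟩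
    fun j => weightedTotalDegree w (f j)
  have htop : ∑ k, weightedHomogeneousComponent w D (f k) ^ 2 = 0 := by
    rw [← h.weightedHomogeneousComponent_ne (D + D) (by omega), map_sum]
    simp only [sq, weightedHomogeneousComponent_add_mul_of_weightedTotalDegree_le w (hle _) (hle _)]
  have hfj : f j ≠ 0 := by
    rintro h0
    simp only [h0, weightedTotalDegree_zero, Nat.bot_eq_zero] at hj
    omega
  exact weightedHomogeneousComponent_weightedTotalDegree_ne_zero w hfj
    (hj ▸ eq_zero_of_sum_sq_eq_zero htop j)

theorem weightedHomogeneousComponent_zero_eq_zero_of_isWeightedHomogeneous_sum_sq {m : ℕ}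
    (h : IsWeightedHomogeneous w (∑ i, f i ^ 2) m) (hm : m ≠ 0) (i : ι) :
    weightedHomogeneousComponent w 0 (f i) = 0 := by
  refine eq_zero_of_sum_sq_eq_zero (f := fun i => weightedHomogeneousComponent w 0 (f i)) ?_ i
  rw [← h.weightedHomogeneousComponent_ne 0 hm.symm, map_sum]
  simp only [sq, weightedHomogeneousComponent_zero_mul]

theorem isWeightedHomogeneous_one_of_isWeightedHomogeneous_sum_sq
    (h : IsWeightedHomogeneous w (∑ i, f i ^ 2) 2) (i : ι) :
    IsWeightedHomogeneous w (f i) 1 := by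
  intro d hd
  have hle : weight w d ≤ 1 := (le_weightedTotalDegree w (mem_support_iff.mpr hd)).trans
    (weightedTotalDegree_le_of_isWeightedHomogeneous_sum_sq w h i)
  have hpos : weight w d ≠ 0 := fun h0 => hd <| by
    simpa [coeff_weightedHomogeneousComponent, h0] using congrArg (coeff d)
      (weightedHomogeneousComponent_zero_eq_zero_of_isWeightedHomogeneous_sum_sq w h two_ne_zero i)
  omega

end SumsOfSquares

section TwoGroupsOfVariables

variable {σ τ R : Type*} [CommSemiring R]

/-- `y ⬝ v(x)` and `yᵀ P(x) y`, where `x` are the variables in `σ` and `y` those in `τ`. -/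
noncomputable def linearForm [Fintype τ] (v : τ → MvPolynomial σ R) : MvPolynomial (σ ⊕ τ) R :=
  ∑ j, X (Sum.inr j) * rename Sum.inl (v j)

noncomputable def quadForm [Fintype τ] (P : Matrix τ τ (MvPolynomial σ R)) :
    MvPolynomial (σ ⊕ τ) R :=
  ∑ i, ∑ j, X (Sum.inr i) * X (Sum.inr j) * rename Sum.inl (P i j)

theorem isWeightedHomogeneous_rename_inl (p : MvPolynomial σ R) :
    IsWeightedHomogeneous (Sum.elim 0 1 : σ ⊕ τ → ℕ) (rename Sum.inl p) 0 := by
  induction p using MvPolynomial.induction_on with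
  | C a => simpa using isWeightedHomogeneous_C _ a
  | add p q hp hq => simpa using hp.add hq
  | mul_X p i hp => simpa using hp.mul (isWeightedHomogeneous_X R _ (Sum.inl i))

theorem isWeightedHomogeneous_quadForm [Fintype τ] (P : Matrix τ τ (MvPolynomial σ R)) :
    IsWeightedHomogeneous (Sum.elim 0 1) (quadForm P) 2 :=
  IsWeightedHomogeneous.sum _ _ _ fun i _ => IsWeightedHomogeneous.sum _ _ _ fun j _ =>
    ((isWeightedHomogeneous_X R _ (Sum.inr i)).mul (isWeightedHomogeneous_X R _ (Sum.inr j))).mul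
      (isWeightedHomogeneous_rename_inl (P i j))

theorem exists_rename_inl_eq_of_isWeightedHomogeneous_zero {φ : MvPolynomial (σ ⊕ τ) R}
    (h : IsWeightedHomogeneous (Sum.elim 0 1) φ 0) :
    ∃ q : MvPolynomial σ R, rename Sum.inl q = φ := by
  refine exists_rename_eq_of_vars_subset_range φ _ Sum.inl_injective fun v hv => ?_
  obtain ⟨d, hd, hvd⟩ := (mem_vars_iff_mem_support v).mp hv
  cases v with
  | inl x => exact ⟨x, rfl⟩
  | inr y =>
    have := le_weight_of_ne_zero' (Sum.elim 0 1 : σ ⊕ τ → ℕ) (Finsupp.mem_support_iff.mp hvd)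
    rw [h (mem_support_iff.mp hd)] at this
    simp at this

theorem exists_eq_linearForm_of_isWeightedHomogeneous_one [Fintype σ] [Fintype τ]
    {φ : MvPolynomial (σ ⊕ τ) R} (h : IsWeightedHomogeneous (Sum.elim 0 1) φ 1) :
    ∃ v : τ → MvPolynomial σ R, φ = linearForm v := by
  choose v hv using fun j => exists_rename_inl_eq_of_isWeightedHomogeneous_zero
    (h.pderiv (i := Sum.inr j) (zero_add 1))
  refine ⟨v, ?_⟩
  simpa [Fintype.sum_sum_type, hv, linearForm] using h.sum_weight_X_mul_pderiv.symm

theorem quadForm_transpose_mul [Fintype τ] {ι : Type*} [Fintype ι]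
    (M : Matrix ι τ (MvPolynomial σ R)) :
    quadForm (Mᵀ * M) = ∑ k, linearForm (M k) ^ 2 := by
  simp only [linearForm, sq, Finset.sum_mul_sum]
  rw [Finset.sum_comm]
  refine Finset.sum_congr rfl fun i _ => ?_
  rw [Finset.sum_comm]
  refine Finset.sum_congr rfl fun j _ => ?_
  simp only [Matrix.mul_apply, Matrix.transpose_apply, map_sum, map_mul, Finset.mul_sum]
  refine Finset.sum_congr rfl fun k _ => ?_
  ring

theorem pderiv_inr_rename_inl (j : τ) (p : MvPolynomial σ R) :
    pderiv (Sum.inr j) (rename Sum.inl p) = 0 := by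
  refine pderiv_eq_zero_of_notMem_vars fun hj => ?_
  obtain ⟨i, -, hi⟩ := mem_vars_rename _ _ hj
  exact Sum.inl_ne_inr hi

theorem pderiv_inr_pderiv_inr_quadForm [Fintype τ] (P : Matrix τ τ (MvPolynomial σ R))
    (i j : τ) :
    pderiv (Sum.inr i) (pderiv (Sum.inr j) (quadForm P)) = rename Sum.inl (P i j + P j i) := by
  classical
  simp [quadForm, Derivation.leibniz, pderiv_X, pderiv_inr_rename_inl, Pi.single_apply, mul_add,
    Finset.sum_add_distrib, add_comm]

theorem eq_of_quadForm_eq_of_isSymm [Fintype τ] [IsAddTorsionFree R]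
    {P P' : Matrix τ τ (MvPolynomial σ R)} (hP : P.IsSymm) (hP' : P'.IsSymm)
    (h : quadForm P = quadForm P') : P = P' := by
  refine Matrix.ext fun i j => ?_
  have := congrArg (fun φ => pderiv (Sum.inr i) (pderiv (Sum.inr j) φ)) h
  simp only [pderiv_inr_pderiv_inr_quadForm, hP.apply i j, hP'.apply i j, ← two_nsmul] at this
  ext m
  exact nsmul_right_injective two_ne_zero
    (by simpa only [coeff_smul] using
      congrArg (coeff m) (rename_injective _ Sum.inl_injective this))

end TwoGroupsOfVariables

end MvPolynomial

open MvPolynomial Matrix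

/-- A symmetric `r × r` polynomial matrix `P(x)` in `n` variables is an SOS matrix
(`P(x) = M(x)ᵀ M(x)` for some polynomial matrix `M`) if and only if the scalar
polynomial `yᵀ P(x) y`, viewed as a polynomial in the `n + r` variables
`(x₁,…,xₙ,y₁,…,y_r)`, is a sum of squares of polynomials. -/
theorem sos_matrix_iff_scalar_sos {n r : ℕ}
    (P : Matrix (Fin r) (Fin r) (MvPolynomial (Fin n) ℝ)) (hPsym : P.IsSymm) :
    (∃ (s : ℕ) (M : Matrix (Fin s) (Fin r) (MvPolynomial (Fin n) ℝ)), P = Mᵀ * M) ↔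
      (∃ (s : ℕ) (f : Fin s → MvPolynomial (Fin n ⊕ Fin r) ℝ),
        (∑ i : Fin r, ∑ j : Fin r,
            MvPolynomial.X (Sum.inr i) * MvPolynomial.X (Sum.inr j) *
              MvPolynomial.rename Sum.inl (P i j)) = ∑ i, (f i) ^ 2) := by
  show _ ↔ ∃ s, ∃ f : Fin s → _, quadForm P = ∑ i, f i ^ 2
  constructor
  · rintro ⟨s, M, rfl⟩
    exact ⟨s, fun k => linearForm (M k), quadForm_transpose_mul M⟩
  · rintro ⟨s, f, hf⟩
    have hlin := isWeightedHomogeneous_one_of_isWeightedHomogeneous_sum_sq _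
      (hf ▸ isWeightedHomogeneous_quadForm P)
    choose M hM using fun i => exists_eq_linearForm_of_isWeightedHomogeneous_one (hlin i)
    refine ⟨s, of M, eq_of_quadForm_eq_of_isSymm hPsym (transpose_mul _ (of M)) ?_⟩
    rw [quadForm_transpose_mul, hf]
    simp_rw [hM]
    rfl
end

section
/- Let G = (V, E) be a chordal graph on V = {1, ..., r} with maximal cliques C_1, ..., C_t, and fix n, d with N = binomial(n+d,d). A partial symmetric polynomial matrix P(x) with pattern E (entries p_ij of degree at most 2d specified for (i,j) ∈ E*) admits an SOS completion, i.e., P ∈ Σ^r_{n,2d}(E, ?), if and only if (i) each principal submatrix P_k(x) = E_{C_k} P(x) E_{C_k}^T is an SOS matrix in Σ^{|C_k|}_{n,2d}, and (ii) the cliques' Gram matrices can be chosen consistently: there exist positive semidefinite Gram matrices Q_k ∈ S^{|C_k|N}_+ with P_k(x) = (I_{|C_k|} ⊗ v_d(x))^T Q_k (I_{|C_k|} ⊗ v_d(x)) such that for every pair i, j with overlapping hyper-cliques C̃_i ∩ C̃_j ≠ ∅, the inflated matrices agree on the overlap: E_{C̃_i ∩ C̃_j} ( E_{C̃_i}^T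 Q_i E_{C̃_i} − E_{C̃_j}^T Q_j E_{C̃_j} ) E_{C̃_i ∩ C̃_j}^T = 0. -/
open Matrix

/-- A graph is chordal if every cycle of length at least 4 has a chord,
i.e. an edge joining two nonconsecutive nodes of the cycle. -/
def IsChordalGraph {V : Type*} (G : SimpleGraph V) : Prop :=
  ∀ (k : ℕ), 4 ≤ k → ∀ v : ZMod k → V, Function.Injective v →
    (∀ i, G.Adj (v i) (v (i + 1))) →
    ∃ i j : ZMod k, i ≠ j ∧ j ≠ i + 1 ∧ i ≠ j + 1 ∧ G.Adj (v i) (v j)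

/-- A maximal clique: a clique not contained in any other clique. -/
def IsMaxClique {V : Type*} (G : SimpleGraph V) (s : Finset V) : Prop :=
  G.IsClique ↑s ∧ ∀ t : Finset V, G.IsClique ↑t → s ⊆ t → s = t

/-- The 0/1 index matrix `E_C` of a vertex subset `C ⊆ {1,…,r}`. -/
def indexMatrix {r : ℕ} (R : Type*) [Zero R] [One R] (C : Finset (Fin r)) :
    Matrix (Fin C.card) (Fin r) R :=
  Matrix.of fun i j => if ((C.orderIsoOfFin rfl i : Fin r) = j) then 1 else 0

/-- The 0/1 index matrix `E_{C̃}` of the hyper-clique `C̃` of `C` with block size `N`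
(rows and columns of `{1,…,rN}` being indexed by pairs in `Fin r × Fin N`). -/
def hyperIndexMatrix {r : ℕ} (R : Type*) [Zero R] [One R] (N : ℕ) (C : Finset (Fin r)) :
    Matrix (Fin C.card × Fin N) (Fin r × Fin N) R :=
  Matrix.of fun p q =>
    if ((C.orderIsoOfFin rfl p.1 : Fin r) = q.1 ∧ p.2 = q.2) then 1 else 0

/-- `v` enumerates (as monomials) all exponent vectors of total degree at most `d`
in `n` variables, i.e. it is the monomial vector `v_d(x)` up to ordering. -/
def IsMonomialBasis (n d : ℕ) {N : ℕ} (v : Fin N → MvPolynomial (Fin n) ℝ) : Prop :=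
  ∃ m : Fin N → (Fin n →₀ ℕ), Function.Injective m ∧
    (∀ i, (m i).sum (fun _ e => e) ≤ d) ∧
    (∀ s : Fin n →₀ ℕ, (s.sum fun _ e => e) ≤ d → ∃ i, m i = s) ∧
    (∀ i, v i = MvPolynomial.monomial (m i) 1)

/-- The `mN × m` polynomial matrix `I_m ⊗ v(x)`, with its column index collapsed. -/
noncomputable def idKronV (m : ℕ) {N n : ℕ} (v : Fin N → MvPolynomial (Fin n) ℝ) :
    Matrix (Fin m × Fin N) (Fin m) (MvPolynomial (Fin n) ℝ) :=
  Matrix.of fun p j => if p.1 = j then v p.2 else 0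

/-!
If `F = Mᵀ M` is an SOS completion, expanding the entries of `M` in the monomial basis writes
`F = (I ⊗ v)ᵀ Q (I ⊗ v)` with `Q` PSD; the principal submatrices of `Q` on the hyper-cliques are
PSD Gram matrices of the clique blocks `P_k`, consistent because they are cut out of one `Q`.

Conversely, consistent Gram matrices glue to a partial real block matrix, specified on the
`N × N` blocks `(i, j)` with `i = j` or `i ~ j`, whose blocks over every clique form a PSD matrix.
By the block form of the Grone–Johnson–Sá–Wolkowicz theorem for the chordal graph `G` it has a
PSD completion `Q`, and `(I ⊗ v)ᵀ Q (I ⊗ v)` is an SOS completion of `P`. That theorem is proved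
by deleting a simplicial vertex `v` (one exists by Dirac's theorem, because minimal vertex
separators of chordal graphs are cliques) and merging the completion of `G - v` with the PSD
block over the clique `{v} ∪ N(v)`; two PSD matrices agreeing on their overlap are merged by
sending the Gram vectors of one onto those of the other with a linear isometry.
-/

namespace SimpleGraph

variable {V : Type*} {G : SimpleGraph V}

namespace Walk

/-- A positional form of `IsPath ∧ IsChordless`. -/
def IsInducedPath {u v : V} (p : G.Walk u v) : Prop :=
  p.IsPath ∧ ∀ i j, i + 1 < j → j ≤ p.length → ¬ G.Adj (p.getVert i) (p.getVert j)

lemma exists_shorter_of_adj_getVert {u v : V} (p : G.Walk u v) {i j : ℕ} (hij : i + 1 < j)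
    (hj : j ≤ p.length) (h : G.Adj (p.getVert i) (p.getVert j)) :
    ∃ q : G.Walk u v, q.length < p.length ∧ q.support ⊆ p.support := by
  refine ⟨(p.take i).append (cons h (p.drop j)), ?_, fun y hy => ?_⟩
  · simp only [length_append, take_length, length_cons, drop_length]
    omega
  rcases mem_support_append_iff _ _ |>.mp hy with hy | hy
  · rw [support_take] at hy
    exact List.mem_of_mem_take hy
  rcases List.mem_cons.mp (support_cons _ _ ▸ hy) with rfl | hy
  · exact p.getVert_mem_support i
  · rw [drop_support_eq_support_drop_min] at hy
    exact List.mem_of_mem_drop hy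

lemma getVert_append_of_le {u v w : V} (p : G.Walk u v) (q : G.Walk v w) {i : ℕ}
    (hi : i ≤ p.length) : (p.append q).getVert i = p.getVert i := by
  rw [getVert_append]
  split_ifs with h
  · rfl
  · rw [show i = p.length by omega, Nat.sub_self, getVert_zero, getVert_length]

lemma getVert_append_of_ge {u v w : V} (p : G.Walk u v) (q : G.Walk v w) {i : ℕ}
    (hi : p.length ≤ i) : (p.append q).getVert i = q.getVert (i - p.length) := by
  rw [getVert_append, if_neg (by omega)]

lemma two_le_length {u v : V} (p : G.Walk u v) (huv : u ≠ v) (h : ¬ G.Adj u v) :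
    2 ≤ p.length := by
  by_contra hp
  interval_cases hl : p.length
  exacts [huv (eq_of_length_eq_zero hl), h (adj_of_length_eq_one hl)]

lemma IsInducedPath.reverse {u v : V} {p : G.Walk u v} (hp : p.IsInducedPath) :
    p.reverse.IsInducedPath := by
  refine ⟨hp.1.reverse, fun i j hij hj hadj => ?_⟩
  rw [length_reverse] at hj
  rw [getVert_reverse, getVert_reverse] at hadj
  exact hp.2 (p.length - j) (p.length - i) (by omega) (by omega) hadj.symm

lemma IsPath.getVert_mem_of_support_subset {u w : V} {A : Set V} {p : G.Walk u w}
    (hp : p.IsPath) (hA : ∀ z ∈ p.support, z ∈ insert u (insert w A)) {i : ℕ} (hi₀ : 0 < i)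
    (hi : i < p.length) : p.getVert i ∈ A := by
  rcases hA _ (p.getVert_mem_support i) with h | h | h
  · exact absurd ((hp.getVert_eq_start_iff hi.le).mp h) hi₀.ne'
  · exact absurd ((hp.getVert_eq_end_iff hi.le).mp h) hi.ne
  · exact h

end Walk

def ReachableWithin (G : SimpleGraph V) (X : Set V) (x y : V) : Prop :=
  ∃ p : G.Walk x y, ∀ z ∈ p.support, z ∈ X

namespace ReachableWithin

variable {X : Set V} {x y z : V}

lemma refl (hx : x ∈ X) : G.ReachableWithin X x x :=
  ⟨.nil, by simpa using hx⟩

lemma symm (h : G.ReachableWithin X x y) : G.ReachableWithin X y x := by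
  obtain ⟨p, hp⟩ := h
  exact ⟨p.reverse, fun z hz => hp z (by simpa using hz)⟩

lemma trans (hxy : G.ReachableWithin X x y) (hyz : G.ReachableWithin X y z) :
    G.ReachableWithin X x z := by
  obtain ⟨p, hp⟩ := hxy
  obtain ⟨q, hq⟩ := hyz
  refine ⟨p.append q, fun w hw => ?_⟩
  rcases Walk.mem_support_append_iff _ _ |>.mp hw with hw | hw
  exacts [hp w hw, hq w hw]

lemma mem_right (h : G.ReachableWithin X x y) : y ∈ X := by
  obtain ⟨p, hp⟩ := h
  exact hp y p.end_mem_support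

lemma step (h : G.ReachableWithin X x y) (hyz : G.Adj y z) (hz : z ∈ X) :
    G.ReachableWithin X x z :=
  h.trans ⟨.cons hyz .nil, by simp [h.mem_right, hz]⟩

lemma mono {Y : Set V} (h : G.ReachableWithin X x y) (hXY : X ⊆ Y) : G.ReachableWithin Y x y := by
  obtain ⟨p, hp⟩ := h
  exact ⟨p, fun z hz => hXY (hp z hz)⟩

lemma within_component (h : G.ReachableWithin X x y) :
    G.ReachableWithin {z | G.ReachableWithin X x z} x y := by
  classical
  obtain ⟨p, hp⟩ := h
  exact ⟨p, fun z hz => ⟨p.takeUntil z hz,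
    fun w hw => hp w (p.support_takeUntil_subset_support hz hw)⟩⟩

lemma exists_adj_of_walk (hx : G.ReachableWithin X x y) (p : G.Walk y z)
    (hp : ∀ w ∈ p.support, w ∈ insert z X) (hz : z ∉ X) :
    ∃ w, G.ReachableWithin X x w ∧ G.Adj w z := by
  induction p with
  | nil => exact absurd hx.mem_right hz
  | @cons y y' z h q ih =>
    by_cases hy' : y' = z
    · subst hy'
      exact ⟨y, hx, h⟩
    · have hy'X : y' ∈ X :=
        (hp y' (by simp)).resolve_left hy'
      exact ih (hx.step h hy'X) (fun w hw => hp w (by simp [hw])) hz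

lemma exists_isInducedPath (h : G.ReachableWithin X x y) :
    ∃ p : G.Walk x y, p.IsInducedPath ∧ ∀ z ∈ p.support, z ∈ X := by
  classical
  have hex : ∃ n, ∃ p : G.Walk x y, (∀ z ∈ p.support, z ∈ X) ∧ p.length = n :=
    let ⟨p, hp⟩ := h; ⟨_, p, hp, rfl⟩
  obtain ⟨p, hp, hlen⟩ := Nat.find_spec hex
  have hmin : ∀ q : G.Walk x y, (∀ z ∈ q.support, z ∈ X) → p.length ≤ q.length :=
    fun q hq => hlen ▸ Nat.find_min' hex ⟨q, hq, rfl⟩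
  refine ⟨p.bypass, ⟨p.bypass_isPath, fun i j hij hj hadj => ?_⟩,
    fun z hz => hp z (p.support_bypass_subset_support hz)⟩
  obtain ⟨q, hq, hsub⟩ := p.bypass.exists_shorter_of_adj_getVert hij hj hadj
  have := hmin q fun z hz => hp z (p.support_bypass_subset_support (hsub hz))
  have := p.length_bypass_le_length
  omega

end ReachableWithin

def IsSimplicialIn (G : SimpleGraph V) (U : Set V) (x : V) : Prop :=
  ∀ y ∈ U, ∀ z ∈ U, G.Adj x y → G.Adj x z → y ≠ z → G.Adj y z

lemma IsSimplicialIn.of_adj_mem {U U' : Set V} {x : V} (h : G.IsSimplicialIn U' x)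
    (hN : ∀ y ∈ U, G.Adj x y → y ∈ U') : G.IsSimplicialIn U x :=
  fun y hy z hz hxy hxz hyz => h y (hN y hy hxy) z (hN z hz hxz) hxy hxz hyz

def Separates (G : SimpleGraph V) (U S : Set V) (a b : V) : Prop :=
  a ∉ S ∧ b ∉ S ∧ ¬ G.ReachableWithin (U \ S) a b

namespace Separates

variable {U S : Set V} {a b : V}

lemma symm (h : G.Separates U S a b) : G.Separates U S b a :=
  ⟨h.2.1, h.1, fun hba => h.2.2 hba.symm⟩

lemma ne_and_not_adj (h : G.Separates U S a b) {x y : V} (hx : G.ReachableWithin (U \ S) a x)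
    (hy : G.ReachableWithin (U \ S) b y) : x ≠ y ∧ ¬ G.Adj x y := by
  refine ⟨fun hxy => h.2.2 (hx.trans (hxy ▸ hy.symm)), fun hxy => h.2.2 ?_⟩
  exact (hx.step hxy hy.mem_right).trans hy.symm

lemma exists_adj (h : G.Separates U S a b) {u : V} (hu : u ∈ S)
    (hmin : ¬ G.Separates U (S \ {u}) a b) : ∃ x, G.ReachableWithin (U \ S) a x ∧ G.Adj x u := by
  classical
  obtain ⟨p, hp⟩ : G.ReachableWithin (U \ (S \ {u})) a b := by
    by_contra hab
    exact hmin ⟨fun ha => h.1 ha.1, fun hb => h.2.1 hb.1, hab⟩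
  have hpS : ∀ z ∈ p.support, z ∈ insert u (U \ S) := fun z hz => by
    have := hp z hz
    by_cases hzu : z = u
    · exact .inl hzu
    · exact .inr ⟨this.1, fun hzS => this.2 ⟨hzS, hzu⟩⟩
  have hup : u ∈ p.support := by
    by_contra hup
    exact h.2.2 ⟨p, fun z hz => (hpS z hz).resolve_left (fun hzu => hup (hzu ▸ hz))⟩
  refine ReachableWithin.refl ((hpS a p.start_mem_support).resolve_left ?_)
    |>.exists_adj_of_walk (p.takeUntil u hup)
      (fun z hz => hpS z (p.support_takeUntil_subset_support hup hz)) (fun hu' => hu'.2 hu)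
  rintro rfl
  exact h.1 hu

end Separates

lemma exists_minimal_separates {U : Finset V} {a b : V} (ha : a ∈ U) (hb : b ∈ U) (hab : a ≠ b)
    (hnadj : ¬ G.Adj a b) :
    ∃ S ⊆ U, G.Separates U S a b ∧ ∀ u ∈ S, ¬ G.Separates U (↑S \ {u}) a b := by
  classical
  have hsub : (U.erase a).erase b ⊆ U := (Finset.erase_subset _ _).trans (Finset.erase_subset _ _)
  have hsep : G.Separates U ↑((U.erase a).erase b) a b := by
    refine ⟨by simp, by simp, ?_⟩
    rintro ⟨_ | @⟨_, c, _, h, p⟩, hp⟩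
    · exact hab rfl
    · have := hp c (List.mem_cons_of_mem _ p.start_mem_support)
      simp only [Finset.coe_erase, Set.mem_sdiff, Set.mem_singleton_iff, not_and, not_not] at this
      obtain rfl | rfl : c = a ∨ c = b := by tauto
      exacts [h.ne rfl, hnadj h]
  obtain ⟨S, hS, hmin⟩ := Finset.exists_min_image
    (U.powerset.filter fun S : Finset V => G.Separates U S a b) Finset.card
    ⟨_, Finset.mem_filter.mpr ⟨Finset.mem_powerset.mpr hsub, hsep⟩⟩
  rw [Finset.mem_filter, Finset.mem_powerset] at hS
  refine ⟨S, hS.1, hS.2, fun u hu hu' => ?_⟩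
  have := hmin (S.erase u) (by simpa using ⟨(S.erase_subset u).trans hS.1, hu'⟩)
  exact (Finset.card_erase_lt_of_mem hu).not_ge this

lemma Separates.exists_isSimplicialIn {U S : Finset V} {c d : V} (hcd : G.Separates U S c d)
    (hSU : S ⊆ U) (hc : c ∈ U) (hd : d ∈ U) (hS : G.IsClique (S : Set V))
    (ih : ∀ U' ⊂ U, G.IsClique (U' : Set V) ∨ ∃ a ∈ U', ∃ b ∈ U', a ≠ b ∧ ¬ G.Adj a b ∧
      G.IsSimplicialIn U' a ∧ G.IsSimplicialIn U' b) :
    ∃ x, G.ReachableWithin (U \ S) c x ∧ G.IsSimplicialIn U x := by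
  classical
  set A := U.filter (G.ReachableWithin (↑U \ ↑S) c)
  have hA : ∀ x, x ∈ A ↔ G.ReachableWithin (U \ S) c x := fun x =>
    ⟨fun h => (Finset.mem_filter.mp h).2, fun h => Finset.mem_filter.mpr ⟨h.mem_right.1, h⟩⟩
  have hsub : A ∪ S ⊂ U := by
    refine Finset.ssubset_iff_subset_ne.mpr ⟨Finset.union_subset (Finset.filter_subset _ _) hSU,
      fun h => ?_⟩
    rcases Finset.mem_union.mp (h ▸ hd) with hdA | hdS
    exacts [hcd.2.2 ((hA d).mp hdA), hcd.2.1 hdS]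
  have hclosed : ∀ x ∈ A, ∀ y ∈ U, G.Adj x y → y ∈ (↑(A ∪ S) : Set V) := by
    intro x hx y hy hxy
    by_cases hyS : y ∈ S
    · simp [hyS]
    · simp [hA, ((hA x).mp hx).step hxy ⟨hy, hyS⟩]
  have lift : ∀ x ∈ A ∪ S, x ∉ S → G.IsSimplicialIn ↑(A ∪ S) x →
      ∃ x, G.ReachableWithin (U \ S) c x ∧ G.IsSimplicialIn U x := by
    intro x hx hxS hsimp
    have hxA : x ∈ A := (Finset.mem_union.mp hx).resolve_right hxS
    exact ⟨x, (hA x).mp hxA, hsimp.of_adj_mem (hclosed x hxA)⟩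
  rcases ih _ hsub with hcl | ⟨x, hx, y, hy, hxy, hnxy, hxs, hys⟩
  · have hcc : G.ReachableWithin (U \ S) c c := .refl ⟨hc, hcd.1⟩
    have hcA : c ∈ A := (hA c).mpr hcc
    exact ⟨c, hcc, fun y hy z hz hcy hcz hyz =>
      hcl (hclosed c hcA y hy hcy) (hclosed c hcA z hz hcz) hyz⟩
  by_cases hxS : x ∈ S
  · by_cases hyS : y ∈ S
    · exact absurd (hS hxS hyS hxy) hnxy
    · exact lift y hy hyS hys
  · exact lift x hx hxS hxs

end SimpleGraph

namespace IsChordalGraph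

open SimpleGraph

variable {V : Type*} {G : SimpleGraph V}

lemma exists_chord (hG : IsChordalGraph G) {u : V} (c : G.Walk u u) (h4 : 4 ≤ c.length)
    (hc : Set.InjOn c.getVert {i | i < c.length}) :
    ∃ i j, i + 1 < j ∧ j < c.length ∧ (0 < i ∨ j + 1 < c.length) ∧
      G.Adj (c.getVert i) (c.getVert j) := by
  have : Fact (1 < c.length) := ⟨by omega⟩
  have hval : ∀ i : ZMod c.length, (i + 1).val = (i.val + 1) % c.length := fun i => by
    rw [ZMod.val_add, ZMod.val_one]
  have hsucc : ∀ i : ZMod c.length, i.val + 1 < c.length → (i + 1).val = i.val + 1 :=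
    fun i hi => (hval i).trans (Nat.mod_eq_of_lt hi)
  have key : ∀ i j : ZMod c.length, i.val < j.val → j ≠ i + 1 → i ≠ j + 1 →
      G.Adj (c.getVert i.val) (c.getVert j.val) →
      ∃ i j, i + 1 < j ∧ j < c.length ∧ (0 < i ∨ j + 1 < c.length) ∧
        G.Adj (c.getVert i) (c.getVert j) := by
    intro i j hij hji hij' hadj
    have hj := j.val_lt
    refine ⟨i.val, j.val, ?_, j.val_lt, ?_, hadj⟩
    · by_contra h
      exact hji (ZMod.val_injective _ (by rw [hsucc i (by omega)]; omega))
    · by_contra h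
      refine hij' (ZMod.val_injective _ ?_)
      rw [hval, show j.val + 1 = c.length by omega, Nat.mod_self]
      omega
  obtain ⟨i, j, hij, hji, hij', hadj⟩ := hG c.length h4 (fun i => c.getVert i.val)
    (fun i j h => ZMod.val_injective _ (hc i.val_lt j.val_lt h)) (fun i => by
      have hadj := c.adj_getVert_succ i.val_lt
      by_cases hlast : i.val + 1 = c.length
      · rw [hlast, c.getVert_length] at hadj
        rwa [hval, hlast, Nat.mod_self, c.getVert_zero]
      · rwa [hsucc i (by have := i.val_lt; omega)])
  rcases lt_or_gt_of_ne (fun h => hij (ZMod.val_injective _ h)) with h | h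
  · exact key i j h hji hij' hadj
  · exact key j i h hij' hji hadj.symm

theorem adj_of_isInducedPath (hG : IsChordalGraph G) {u w : V} {A B : Set V}
    {P₁ : G.Walk u w} {P₂ : G.Walk w u} (hP₁ : P₁.IsInducedPath) (hP₂ : P₂.IsInducedPath)
    (hA : ∀ i, 0 < i → i < P₁.length → P₁.getVert i ∈ A)
    (hB : ∀ i, 0 < i → i < P₂.length → P₂.getVert i ∈ B)
    (hAB : ∀ x ∈ A, ∀ y ∈ B, x ≠ y ∧ ¬ G.Adj x y) (hu : u ∉ B) (huw : u ≠ w) :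
    G.Adj u w := by
  by_contra hnadj
  have hlen₁ := P₁.two_le_length huw hnadj
  have hlen₂ := P₂.two_le_length huw.symm fun h => hnadj h.symm
  set L₁ := P₁.length
  set c := P₁.append P₂
  have hc : c.length = L₁ + P₂.length := Walk.length_append _ _
  have hc₁ : ∀ i ≤ L₁, c.getVert i = P₁.getVert i := fun i => P₁.getVert_append_of_le P₂
  have hc₂ : ∀ i, L₁ ≤ i → c.getVert i = P₂.getVert (i - L₁) := fun i =>
    P₁.getVert_append_of_ge P₂
  have hcB : ∀ i, L₁ < i → i < c.length → c.getVert i ∈ B := fun i hi hi' => by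
    rw [hc₂ i hi.le]
    exact hB _ (by omega) (by omega)
  have hcA : ∀ i, 0 < i → i < L₁ → c.getVert i ∈ A := fun i hi hi' => by
    rw [hc₁ i hi'.le]
    exact hA i hi hi'
  have hinj : ∀ i j, i < j → j < c.length → c.getVert i ≠ c.getVert j := by
    intro i j hij hj heq
    rcases le_or_gt j L₁ with hjL | hjL
    · rw [hc₁ i (by omega), hc₁ j hjL] at heq
      exact hij.ne (hP₁.1.getVert_injOn (by simp; omega) (by simp; omega) heq)
    rcases le_or_gt L₁ i with hiL | hiL
    · rw [hc₂ i hiL, hc₂ j (by omega)] at heq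
      have := hP₂.1.getVert_injOn (by simp; omega) (by simp; omega) heq
      omega
    rcases Nat.eq_zero_or_pos i with rfl | hi
    · exact hu (c.getVert_zero ▸ heq ▸ hcB j hjL hj)
    · exact (hAB _ (hcA i hi hiL) _ (hcB j hjL hj)).1 heq
  obtain ⟨i, j, hij, hj, hend, hadj⟩ := hG.exists_chord c (by omega) (fun i hi j hj h => by
    by_contra hne
    rcases lt_or_gt_of_ne hne with hlt | hlt
    exacts [hinj i j hlt hj h, hinj j i hlt hi h.symm])
  rcases le_or_gt j L₁ with hjL | hjL
  · exact hP₁.2 i j hij hjL (by rwa [← hc₁ i (by omega), ← hc₁ j hjL])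
  rcases le_or_gt L₁ i with hiL | hiL
  · exact hP₂.2 (i - L₁) (j - L₁) (by omega) (by omega) (by rwa [← hc₂ i hiL, ← hc₂ j (by omega)])
  rcases Nat.eq_zero_or_pos i with rfl | hi
  · refine hP₂.2 (j - L₁) P₂.length (by omega) le_rfl ?_
    rw [← hc₂ j hjL.le, Walk.getVert_length]
    exact (c.getVert_zero ▸ hadj).symm
  · exact (hAB _ (hcA i hi hiL) _ (hcB j hjL hj)).2 hadj

theorem isClique_of_separates (hG : IsChordalGraph G) {U S : Set V} {a b : V}
    (hS : G.Separates U S a b) (hmin : ∀ u ∈ S, ¬ G.Separates U (S \ {u}) a b) :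
    G.IsClique S := by
  intro u hu w hw huw
  set A := {x | G.ReachableWithin (U \ S) a x}
  set B := {x | G.ReachableWithin (U \ S) b x}
  have through : ∀ {c d : V}, G.Separates U S c d →
      (∀ u ∈ S, ¬ G.Separates U (S \ {u}) c d) → ∃ P : G.Walk u w, P.IsInducedPath ∧
        ∀ i, 0 < i → i < P.length → G.ReachableWithin (U \ S) c (P.getVert i) := by
    intro c d hcd hmin'
    obtain ⟨x, hx, hxu⟩ := hcd.exists_adj hu (hmin' u hu)
    obtain ⟨y, hy, hyw⟩ := hcd.exists_adj hw (hmin' w hw)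
    have hxy : G.ReachableWithin (insert u (insert w {z | G.ReachableWithin (U \ S) c z})) u w :=
      (((ReachableWithin.refl (Set.mem_insert u _)).step hxu.symm (by simp [hx])).trans
        ((hx.within_component.symm.trans hy.within_component).mono (by intro; simp_all))).step
        hyw (by simp)
    obtain ⟨P, hP, hPX⟩ := hxy.exists_isInducedPath
    exact ⟨P, hP, fun i hi hi' => hP.1.getVert_mem_of_support_subset hPX hi hi'⟩
  obtain ⟨P₁, hP₁, hA⟩ := through hS hmin
  obtain ⟨P₂, hP₂, hB⟩ := through hS.symm fun u hu h => hmin u hu h.symm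
  refine hG.adj_of_isInducedPath (A := A) (B := B) hP₁ hP₂.reverse hA ?_
    (fun x hx y hy => hS.ne_and_not_adj hx hy) (fun h => h.mem_right.2 hu) huw
  intro i hi hi'
  rw [Walk.getVert_reverse]
  exact hB _ (by simp at hi'; omega) (by simp at hi' ⊢; omega)

theorem isClique_or_exists_isSimplicialIn (hG : IsChordalGraph G) (U : Finset V) :
    G.IsClique (U : Set V) ∨ ∃ a ∈ U, ∃ b ∈ U, a ≠ b ∧ ¬ G.Adj a b ∧
      G.IsSimplicialIn U a ∧ G.IsSimplicialIn U b := by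
  induction U using Finset.strongInduction with
  | H U ih =>
  by_cases hU : G.IsClique (U : Set V)
  · exact .inl hU
  obtain ⟨a, ha, b, hb, hab, hnadj⟩ : ∃ a ∈ U, ∃ b ∈ U, a ≠ b ∧ ¬ G.Adj a b := by
    simpa [IsClique, Set.Pairwise] using hU
  obtain ⟨S, hSU, hS, hmin⟩ := exists_minimal_separates ha hb hab hnadj
  have hSc := hG.isClique_of_separates hS hmin
  obtain ⟨x, hx, hxs⟩ := hS.exists_isSimplicialIn hSU ha hb hSc ih
  obtain ⟨y, hy, hys⟩ := hS.symm.exists_isSimplicialIn hSU hb ha hSc ih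
  obtain ⟨hxy, hnxy⟩ := hS.ne_and_not_adj hx hy
  exact .inr ⟨x, hx.mem_right.1, y, hy.mem_right.1, hxy, hnxy, hxs, hys⟩

theorem exists_isSimplicialIn (hG : IsChordalGraph G) {U : Finset V}
    (hU : U.Nonempty) : ∃ v ∈ U, G.IsSimplicialIn U v := by
  rcases hG.isClique_or_exists_isSimplicialIn U with hcl | ⟨a, ha, -, -, -, -, hsa, -⟩
  · obtain ⟨v, hv⟩ := hU
    exact ⟨v, hv, fun y hy z hz _ _ hyz => hcl hy hz hyz⟩
  · exact ⟨a, ha, hsa⟩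

end IsChordalGraph

section PosSemidefCompletion

open Matrix
open scoped ComplexOrder

variable {𝕜 : Type*} [RCLike 𝕜]

open scoped MatrixOrder in
lemma Matrix.PosSemidef.exists_eq_conjTranspose_mul_self {ι : Type*} [Fintype ι] [DecidableEq ι]
    {A : Matrix ι ι 𝕜} (hA : A.PosSemidef) : ∃ B : Matrix ι ι 𝕜, A = Bᴴ * B :=
  CStarAlgebra.nonneg_iff_eq_star_mul_self.mp hA.nonneg

lemma Matrix.PosSemidef.exists_eq_gram {ι : Type*} [Fintype ι] [DecidableEq ι]
    {A : Matrix ι ι 𝕜} (hA : A.PosSemidef) : ∃ f : ι → EuclideanSpace 𝕜 ι, A = gram 𝕜 f := by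
  obtain ⟨B, rfl⟩ := hA.exists_eq_conjTranspose_mul_self
  refine ⟨fun j => WithLp.toLp 2 fun i => B i j, ?_⟩
  rw [gram_eq_conjTranspose_mul (EuclideanSpace.basisFun ι 𝕜)]
  rfl

lemma exists_linearIsometry_of_gram_eq {E : Type*} [NormedAddCommGroup E] [InnerProductSpace 𝕜 E]
    [FiniteDimensional 𝕜 E] {κ : Type*} [Fintype κ] {u w : κ → E} (h : gram 𝕜 u = gram 𝕜 w) :
    ∃ T : E →ₗᵢ[𝕜] E, ∀ i, T (u i) = w i := by
  classical
  set K := Fintype.linearCombination 𝕜 u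
  set L := Fintype.linearCombination 𝕜 w
  have hinner : ∀ c c', inner 𝕜 (K c) (K c') = inner 𝕜 (L c) (L c') := fun c c' => by
    simp only [K, L, Fintype.linearCombination_apply, ← star_dotProduct_gram_mulVec, h]
  have hker : LinearMap.ker K ≤ LinearMap.ker L := fun c hc => by
    rw [LinearMap.mem_ker] at hc ⊢
    rw [← inner_self_eq_zero (𝕜 := 𝕜), ← hinner, hc, inner_zero_left]
  let φ : LinearMap.range K →ₗ[𝕜] E :=
    (LinearMap.ker K).liftQ L hker ∘ₗ K.quotKerEquivRange.symm.toLinearMap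
  have hφ : ∀ c, φ ⟨K c, LinearMap.mem_range_self K c⟩ = L c := fun c => by
    simp [φ, LinearMap.quotKerEquivRange_symm_apply_image]
  let T := (φ.isometryOfInner fun x y => by
    obtain ⟨_, c, rfl⟩ := x
    obtain ⟨_, c', rfl⟩ := y
    exact (hφ c ▸ hφ c' ▸ hinner c c').symm).extend
  refine ⟨T, fun i => ?_⟩
  have hu : u i = K (Pi.single i 1) := by simp [K, Fintype.linearCombination_apply, Pi.single_apply]
  have hw : w i = L (Pi.single i 1) := by simp [L, Fintype.linearCombination_apply, Pi.single_apply]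
  rw [hw, ← hφ, hu]
  exact LinearIsometry.extend_apply _ ⟨K (Pi.single i 1), _⟩

theorem Matrix.PosSemidef.exists_posSemidef_eq_on_union {ι : Type*} [Fintype ι] [DecidableEq ι]
    {s₁ s₂ : Set ι} {A B : Matrix ι ι 𝕜} (hA : A.PosSemidef) (hB : B.PosSemidef)
    (hAB : ∀ i ∈ s₁ ∩ s₂, ∀ j ∈ s₁ ∩ s₂, A i j = B i j) :
    ∃ Q : Matrix ι ι 𝕜, Q.PosSemidef ∧ (∀ i ∈ s₁, ∀ j ∈ s₁, Q i j = A i j) ∧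
      ∀ i ∈ s₂, ∀ j ∈ s₂, Q i j = B i j := by
  classical
  obtain ⟨f, rfl⟩ := hA.exists_eq_gram
  obtain ⟨g, rfl⟩ := hB.exists_eq_gram
  obtain ⟨T, hT⟩ := exists_linearIsometry_of_gram_eq (u := fun i : ↥(s₁ ∩ s₂) => g i)
    (w := fun i => f i) (Matrix.ext fun i j => (hAB i i.2 j j.2).symm)
  set h : ι → EuclideanSpace 𝕜 ι := fun i => if i ∈ s₁ then f i else T (g i)
  have hh₂ : ∀ i ∈ s₂, h i = T (g i) := fun i hi => by
    by_cases hi₁ : i ∈ s₁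
    · simp only [h, if_pos hi₁]
      exact (hT ⟨i, hi₁, hi⟩).symm
    · simp only [h, if_neg hi₁]
  refine ⟨gram 𝕜 h, posSemidef_gram 𝕜 h, fun i hi j hj => ?_, fun i hi j hj => ?_⟩
  · simp [h, hi, hj]
  · simp [hh₂ i hi, hh₂ j hj, LinearIsometry.inner_map_map]

theorem IsChordalGraph.exists_posSemidef_completion {V F : Type*}
    [Fintype V] [DecidableEq V] [Fintype F] [DecidableEq F] {G : SimpleGraph V}
    (hG : IsChordalGraph G) (W : Matrix (V × F) (V × F) 𝕜)
    (hW : ∀ s : Finset V, G.IsClique (s : Set V) → ∃ M : Matrix (V × F) (V × F) 𝕜,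
      M.PosSemidef ∧ ∀ p q : V × F, p.1 ∈ s → q.1 ∈ s → M p q = W p q) :
    ∃ Q : Matrix (V × F) (V × F) 𝕜, Q.PosSemidef ∧
      ∀ p q : V × F, (G.Adj p.1 q.1 ∨ p.1 = q.1) → Q p q = W p q := by
  classical
  suffices h : ∀ U : Finset V, ∃ Q : Matrix (V × F) (V × F) 𝕜, Q.PosSemidef ∧
      ∀ p q : V × F, p.1 ∈ U → q.1 ∈ U → (G.Adj p.1 q.1 ∨ p.1 = q.1) → Q p q = W p q by
    obtain ⟨Q, hQ, hQW⟩ := h Finset.univ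
    exact ⟨Q, hQ, fun p q => hQW p q (Finset.mem_univ _) (Finset.mem_univ _)⟩
  intro U
  induction U using Finset.strongInduction with
  | H U ih =>
  rcases U.eq_empty_or_nonempty with rfl | hU
  · exact ⟨0, .zero, by simp⟩
  obtain ⟨v, hvU, hv⟩ := hG.exists_isSimplicialIn hU
  obtain ⟨Q₁, hQ₁, hQ₁W⟩ := ih (U.erase v) (Finset.erase_ssubset hvU)
  set N := U.filter fun y => y = v ∨ G.Adj v y
  have hN : ∀ y ∈ N, ∀ z ∈ N, G.Adj y z ∨ y = z := by
    intro y hy z hz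
    simp only [N, Finset.mem_filter] at hy hz
    by_cases hyz : y = z
    · exact .inr hyz
    rcases hy.2 with rfl | hvy <;> rcases hz.2 with rfl | hvz
    exacts [absurd rfl hyz, .inl hvz, .inl hvy.symm, .inl (hv y hy.1 z hz.1 hvy hvz hyz)]
  obtain ⟨Q₂, hQ₂, hQ₂W⟩ := hW N fun y hy z hz hyz => (hN y hy z hz).resolve_right hyz
  obtain ⟨Q, hQ, hQ₁', hQ₂'⟩ := hQ₁.exists_posSemidef_eq_on_union
    (s₁ := {p : V × F | p.1 ∈ U.erase v}) (s₂ := {p : V × F | p.1 ∈ N}) hQ₂ fun p hp q hq =>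
      (hQ₁W p q hp.1 hq.1 (hN _ hp.2 _ hq.2)).trans (hQ₂W p q hp.2 hq.2).symm
  refine ⟨Q, hQ, fun p q hp hq hpq => ?_⟩
  by_cases hpv : p.1 = v ∨ q.1 = v
  · have hpN : p.1 ∈ N ∧ q.1 ∈ N := by
      simp only [N, Finset.mem_filter]
      rcases hpv with hpv | hpv <;> rw [hpv] at hpq ⊢ <;> tauto
    exact (hQ₂' p hpN.1 q hpN.2).trans (hQ₂W p q hpN.1 hpN.2)
  · rw [not_or] at hpv
    have hp' : p.1 ∈ U.erase v := Finset.mem_erase.mpr ⟨hpv.1, hp⟩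
    have hq' : q.1 ∈ U.erase v := Finset.mem_erase.mpr ⟨hpv.2, hq⟩
    exact (hQ₁' p hp' q hq').trans (hQ₁W p q hp' hq' hpq)

end PosSemidefCompletion

section GramRepresentation

open Matrix MvPolynomial

variable {R σ ι κ : Type*} [CommSemiring R] [Fintype κ] (v : κ → MvPolynomial σ R)

/-- The polynomial matrix `B (I ⊗ v)`. -/
noncomputable def polyMatrixOfCoeffs {ρ : Type*} (B : Matrix ρ (ι × κ) R) :
    Matrix ρ ι (MvPolynomial σ R) :=
  Matrix.of fun p j => ∑ a, C (B p (j, a)) * v a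

/-- The polynomial matrix `(I ⊗ v)ᵀ Q (I ⊗ v)` with Gram matrix `Q`. -/
noncomputable def gramPolyMatrix (Q : Matrix (ι × κ) (ι × κ) R) : Matrix ι ι (MvPolynomial σ R) :=
  Matrix.of fun i j => ∑ a, ∑ b, C (Q (i, a) (j, b)) * (v a * v b)

lemma transpose_polyMatrixOfCoeffs_mul_self {ρ : Type*} [Fintype ρ] (B : Matrix ρ (ι × κ) R) :
    (polyMatrixOfCoeffs v B)ᵀ * polyMatrixOfCoeffs v B = gramPolyMatrix v (Bᵀ * B) := by
  refine Matrix.ext fun i j => ?_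
  simp only [polyMatrixOfCoeffs, gramPolyMatrix, mul_apply, transpose_apply, of_apply, map_sum,
    map_mul, Finset.sum_mul]
  rw [Finset.sum_comm]
  refine Finset.sum_congr rfl fun a _ => ?_
  simp only [Finset.mul_sum]
  rw [Finset.sum_comm]
  refine Finset.sum_congr rfl fun b _ => Finset.sum_congr rfl fun p _ => ?_
  ring

lemma gramPolyMatrix_submatrix {ι' : Type*} (Q : Matrix (ι × κ) (ι × κ) R) (f : ι' → ι) :
    (gramPolyMatrix v Q).submatrix f f =
      gramPolyMatrix v (Q.submatrix (Prod.map f id) (Prod.map f id)) :=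
  rfl

end GramRepresentation

open Matrix MvPolynomial in
lemma idKronV_transpose_mul_map_mul {m n N : ℕ} (v : Fin N → MvPolynomial (Fin n) ℝ)
    (Q : Matrix (Fin m × Fin N) (Fin m × Fin N) ℝ) :
    ((idKronV m v)ᵀ * Q.map (fun a => C a) : Matrix _ _ _) * idKronV m v =
      gramPolyMatrix v Q := by
  -- `Q.map` under the type ascription elaborates with `CStarMatrix` multiplication.
  change (idKronV m v)ᵀ * Q.map (C (σ := Fin n)) * idKronV m v = _
  refine Matrix.ext fun i j => ?_
  simp only [mul_apply, Fintype.sum_prod_type, transpose_apply, idKronV, of_apply, map_apply,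
    ite_mul, zero_mul, mul_ite, mul_zero, Finset.sum_ite_irrel, Finset.sum_const_zero,
    Finset.sum_ite_eq', Finset.mem_univ, if_true, gramPolyMatrix]
  rw [Finset.sum_comm]
  refine Finset.sum_congr rfl fun a _ => ?_
  rw [Finset.sum_mul]
  refine Finset.sum_congr rfl fun b _ => ?_
  ring

namespace IsMonomialBasis

open MvPolynomial

variable {n d N : ℕ} {v : Fin N → MvPolynomial (Fin n) ℝ}

lemma totalDegree_le (hv : IsMonomialBasis n d v) (a : Fin N) : (v a).totalDegree ≤ d := by
  obtain ⟨m, -, hm, -, hvm⟩ := hv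
  rw [hvm a]
  exact (totalDegree_monomial_le _ _).trans (hm a)

lemma exists_eq_sum (hv : IsMonomialBasis n d v) {p : MvPolynomial (Fin n) ℝ}
    (hp : p.totalDegree ≤ d) : ∃ c : Fin N → ℝ, p = ∑ a, C (c a) * v a := by
  classical
  obtain ⟨m, hinj, -, hsurj, hvm⟩ := hv
  refine ⟨fun a => p.coeff (m a), ?_⟩
  simp_rw [hvm, C_mul_monomial, mul_one]
  rw [← Finset.sum_image (f := fun s => monomial s (p.coeff s)) fun a _ b _ h => hinj h]
  conv_lhs => rw [p.as_sum]
  refine Finset.sum_subset (fun s hs => ?_) (fun s _ hs => ?_)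
  · obtain ⟨a, rfl⟩ := hsurj s ((le_totalDegree hs).trans hp)
    exact Finset.mem_image_of_mem m (Finset.mem_univ a)
  · rw [notMem_support_iff.mp hs, monomial_zero]

lemma exists_eq_polyMatrixOfCoeffs (hv : IsMonomialBasis n d v) {ρ ι : Type*}
    (M : Matrix ρ ι (MvPolynomial (Fin n) ℝ)) (hM : ∀ p j, (M p j).totalDegree ≤ d) :
    ∃ B : Matrix ρ (ι × Fin N) ℝ, M = polyMatrixOfCoeffs v B := by
  choose c hc using fun p j => hv.exists_eq_sum (hM p j)
  exact ⟨Matrix.of fun p ja => c p ja.1 ja.2, Matrix.ext hc⟩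

lemma totalDegree_polyMatrixOfCoeffs_le (hv : IsMonomialBasis n d v) {ρ ι : Type*}
    (B : Matrix ρ (ι × Fin N) ℝ) (p : ρ) (j : ι) :
    (polyMatrixOfCoeffs v B p j).totalDegree ≤ d :=
  (totalDegree_finsetSum Finset.univ fun a => C (B p (j, a)) * v a).trans <|
    Finset.sup_le fun a _ =>
      (totalDegree_mul _ _).trans (by rw [totalDegree_C, zero_add]; exact hv.totalDegree_le a)

end IsMonomialBasis

section SOSMatrix

open Matrix

/-- `F ∈ Σ_{n,2d}` in the paper's notation. -/
def IsSOSMatrix {R σ ι : Type*} [CommSemiring R] (d : ℕ) (F : Matrix ι ι (MvPolynomial σ R)) :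
    Prop :=
  ∃ (s : ℕ) (M : Matrix (Fin s) ι (MvPolynomial σ R)), (∀ i j, (M i j).totalDegree ≤ d) ∧
    F = Mᵀ * M

variable {R σ ι : Type*} [CommSemiring R] {d : ℕ}

lemma isSOSMatrix_transpose_mul_self {ρ : Type*} [Fintype ρ]
    (M : Matrix ρ ι (MvPolynomial σ R)) (hM : ∀ p j, (M p j).totalDegree ≤ d) :
    IsSOSMatrix d (Mᵀ * M) := by
  let e := Fintype.equivFin ρ
  refine ⟨Fintype.card ρ, M.submatrix e.symm id, fun i j => hM _ _, ?_⟩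
  rw [transpose_submatrix, ← submatrix_mul _ _ _ _ _ e.symm.bijective, submatrix_id_id]

lemma IsSOSMatrix.submatrix {F : Matrix ι ι (MvPolynomial σ R)} (hF : IsSOSMatrix d F)
    {ι' : Type*} (f : ι' → ι) : IsSOSMatrix d (F.submatrix f f) := by
  obtain ⟨s, M, hM, rfl⟩ := hF
  refine ⟨s, M.submatrix id f, fun i j => hM _ _, ?_⟩
  rw [transpose_submatrix, ← submatrix_mul _ _ _ _ _ Function.bijective_id]

variable {n N : ℕ} {v : Fin N → MvPolynomial (Fin n) ℝ} [Fintype ι]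

lemma IsSOSMatrix.exists_gram (hv : IsMonomialBasis n d v)
    {F : Matrix ι ι (MvPolynomial (Fin n) ℝ)} (hF : IsSOSMatrix d F) :
    ∃ Q : Matrix (ι × Fin N) (ι × Fin N) ℝ, Q.PosSemidef ∧ F = gramPolyMatrix v Q := by
  obtain ⟨s, M, hM, rfl⟩ := hF
  obtain ⟨B, rfl⟩ := hv.exists_eq_polyMatrixOfCoeffs M hM
  refine ⟨Bᵀ * B, ?_, transpose_polyMatrixOfCoeffs_mul_self v B⟩
  simpa only [conjTranspose_eq_transpose_of_trivial] using posSemidef_conjTranspose_mul_self B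

lemma isSOSMatrix_gramPolyMatrix [DecidableEq ι] (hv : IsMonomialBasis n d v)
    {Q : Matrix (ι × Fin N) (ι × Fin N) ℝ} (hQ : Q.PosSemidef) :
    IsSOSMatrix d (gramPolyMatrix v Q) := by
  obtain ⟨B, rfl⟩ := hQ.exists_eq_conjTranspose_mul_self
  rw [conjTranspose_eq_transpose_of_trivial, ← transpose_polyMatrixOfCoeffs_mul_self]
  exact isSOSMatrix_transpose_mul_self _ (hv.totalDegree_polyMatrixOfCoeffs_le B)

end SOSMatrix

section IndexMatrix

open Matrix

variable {r : ℕ} {R : Type*} [Semiring R]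

lemma indexMatrix_eq (C : Finset (Fin r)) :
    indexMatrix R C = (1 : Matrix (Fin r) (Fin r) R).submatrix (C.orderEmbOfFin rfl) id := by
  ext i j
  simp only [indexMatrix, one_apply, submatrix_apply, of_apply, id, Finset.coe_orderIsoOfFin_apply]
  exact if_congr Iff.rfl rfl rfl

lemma indexMatrix_mul_mul_transpose (C : Finset (Fin r)) (P : Matrix (Fin r) (Fin r) R) :
    indexMatrix R C * P * (indexMatrix R C)ᵀ =
      P.submatrix (C.orderEmbOfFin rfl) (C.orderEmbOfFin rfl) := by
  rw [indexMatrix_eq, transpose_submatrix, transpose_one]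
  exact (congrArg (· * _) (one_submatrix_mul _ (Equiv.refl _) P)).trans
    (mul_submatrix_one (Equiv.refl _) _ _)

lemma hyperIndexMatrix_eq (N : ℕ) (C : Finset (Fin r)) :
    hyperIndexMatrix R N C =
      (1 : Matrix (Fin r × Fin N) (Fin r × Fin N) R).submatrix
        (Prod.map (C.orderEmbOfFin rfl) id) id := by
  ext ⟨i, a⟩ ⟨j, b⟩
  simp only [hyperIndexMatrix, one_apply, submatrix_apply, of_apply, id, Prod.map,
    Finset.coe_orderIsoOfFin_apply, Prod.ext_iff]
  exact if_congr Iff.rfl rfl rfl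

lemma hyperIndexMatrix_transpose_mul_mul_apply {N : ℕ} (C : Finset (Fin r))
    (Q : Matrix (Fin C.card × Fin N) (Fin C.card × Fin N) R) (p q : Fin C.card) (a b : Fin N) :
    ((hyperIndexMatrix R N C)ᵀ * Q * hyperIndexMatrix R N C)
      (C.orderEmbOfFin rfl p, a) (C.orderEmbOfFin rfl q, b) = Q (p, a) (q, b) := by
  have he : Function.Injective (Prod.map (C.orderEmbOfFin rfl) (id : Fin N → Fin N)) :=
    (C.orderEmbOfFin rfl).injective.prodMap Function.injective_id
  change (((hyperIndexMatrix R N C)ᵀ * Q * hyperIndexMatrix R N C).submatrix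
    (Prod.map (C.orderEmbOfFin rfl) id) (Prod.map (C.orderEmbOfFin rfl) id)) (p, a) (q, b) = _
  rw [submatrix_mul _ _ _ _ _ Function.bijective_id, submatrix_mul _ _ _ _ _ Function.bijective_id,
    hyperIndexMatrix_eq, transpose_submatrix, transpose_one, submatrix_submatrix,
    submatrix_submatrix, Function.comp_id, Function.id_comp, submatrix_one _ he, submatrix_id_id,
    Matrix.one_mul, Matrix.mul_one]

end IndexMatrix

lemma exists_isMaxClique_superset {V : Type*} [Fintype V] {G : SimpleGraph V} {s : Finset V}
    (hs : G.IsClique (s : Set V)) : ∃ T, s ⊆ T ∧ IsMaxClique G T := by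
  classical
  obtain ⟨T, hT, hmax⟩ := Finset.exists_max_image
    (Finset.univ.filter fun T : Finset V => G.IsClique (T : Set V) ∧ s ⊆ T) Finset.card
    ⟨s, by simp [hs]⟩
  simp only [Finset.mem_filter, Finset.mem_univ, true_and] at hT
  exact ⟨T, hT.2, hT.1, fun U hU hTU =>
    Finset.eq_of_subset_of_card_le hTU (hmax U (by simp [hU, hT.2.trans hTU]))⟩

section CliqueGram

open Matrix

variable {r t n d N : ℕ} {v : Fin N → MvPolynomial (Fin n) ℝ}

lemma hyperIndexMatrix_transpose_mul_submatrix_mul_apply {C : Finset (Fin r)}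
    {Q : Matrix (Fin r × Fin N) (Fin r × Fin N) ℝ} {i j : Fin r} (hi : i ∈ C) (hj : j ∈ C)
    (a b : Fin N) :
    ((hyperIndexMatrix ℝ N C)ᵀ * Q.submatrix (Prod.map (C.orderEmbOfFin rfl) id)
      (Prod.map (C.orderEmbOfFin rfl) id) * hyperIndexMatrix ℝ N C) (i, a) (j, b) =
      Q (i, a) (j, b) := by
  obtain ⟨p, rfl⟩ : i ∈ Set.range (C.orderEmbOfFin rfl) := by rwa [Finset.range_orderEmbOfFin]
  obtain ⟨q, rfl⟩ : j ∈ Set.range (C.orderEmbOfFin rfl) := by rwa [Finset.range_orderEmbOfFin]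
  exact hyperIndexMatrix_transpose_mul_mul_apply C _ p q a b

theorem IsSOSMatrix.exists_consistent_clique_gram (hv : IsMonomialBasis n d v)
    {F : Matrix (Fin r) (Fin r) (MvPolynomial (Fin n) ℝ)} (hF : IsSOSMatrix d F)
    (C : Fin t → Finset (Fin r)) :
    ∃ Qk : (k : Fin t) → Matrix (Fin (C k).card × Fin N) (Fin (C k).card × Fin N) ℝ,
      (∀ k, (Qk k).PosSemidef) ∧
      (∀ k, indexMatrix (MvPolynomial (Fin n) ℝ) (C k) * F *
          (indexMatrix (MvPolynomial (Fin n) ℝ) (C k))ᵀ =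
        ((idKronV (C k).card v)ᵀ * (Qk k).map (fun a => MvPolynomial.C a) : Matrix _ _ _) *
          idKronV (C k).card v) ∧
      (∀ k l : Fin t, ∀ i j : Fin r,
        i ∈ C k ∩ C l → j ∈ C k ∩ C l → ∀ a b : Fin N,
          ((hyperIndexMatrix ℝ N (C k))ᵀ * Qk k * hyperIndexMatrix ℝ N (C k)) (i, a) (j, b) =
            ((hyperIndexMatrix ℝ N (C l))ᵀ * Qk l * hyperIndexMatrix ℝ N (C l)) (i, a) (j, b)) := by
  obtain ⟨Q, hQ, rfl⟩ := hF.exists_gram hv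
  refine ⟨fun k => Q.submatrix (Prod.map ((C k).orderEmbOfFin rfl) id)
    (Prod.map ((C k).orderEmbOfFin rfl) id), fun k => hQ.submatrix _, fun k => ?_,
    fun k l i j hi hj a b => ?_⟩
  · rw [indexMatrix_mul_mul_transpose, idKronV_transpose_mul_map_mul, gramPolyMatrix_submatrix]
  · rw [Finset.mem_inter] at hi hj
    rw [hyperIndexMatrix_transpose_mul_submatrix_mul_apply hi.1 hj.1,
      hyperIndexMatrix_transpose_mul_submatrix_mul_apply hi.2 hj.2]

theorem IsChordalGraph.exists_isSOSMatrix_completion (hv : IsMonomialBasis n d v)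
    {G : SimpleGraph (Fin r)} (hG : IsChordalGraph G) {C : Fin t → Finset (Fin r)}
    (hcover : ∀ s : Finset (Fin r), G.IsClique (s : Set (Fin r)) → ∃ k, s ⊆ C k)
    (P : Matrix (Fin r) (Fin r) (MvPolynomial (Fin n) ℝ))
    (Qk : (k : Fin t) → Matrix (Fin (C k).card × Fin N) (Fin (C k).card × Fin N) ℝ)
    (hpsd : ∀ k, (Qk k).PosSemidef)
    (hgram : ∀ k, indexMatrix (MvPolynomial (Fin n) ℝ) (C k) * P *
          (indexMatrix (MvPolynomial (Fin n) ℝ) (C k))ᵀ =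
        ((idKronV (C k).card v)ᵀ * (Qk k).map (fun a => MvPolynomial.C a) : Matrix _ _ _) *
          idKronV (C k).card v)
    (hcons : ∀ k l : Fin t, ∀ i j : Fin r,
        i ∈ C k ∩ C l → j ∈ C k ∩ C l → ∀ a b : Fin N,
          ((hyperIndexMatrix ℝ N (C k))ᵀ * Qk k * hyperIndexMatrix ℝ N (C k)) (i, a) (j, b) =
            ((hyperIndexMatrix ℝ N (C l))ᵀ * Qk l * hyperIndexMatrix ℝ N (C l)) (i, a) (j, b)) :
    ∃ F, IsSOSMatrix d F ∧ ∀ i j, (G.Adj i j ∨ i = j) → F i j = P i j := by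
  classical
  set Qinf : Fin t → Matrix (Fin r × Fin N) (Fin r × Fin N) ℝ :=
    fun k => (hyperIndexMatrix ℝ N (C k))ᵀ * Qk k * hyperIndexMatrix ℝ N (C k)
  let W : Matrix (Fin r × Fin N) (Fin r × Fin N) ℝ := fun x y =>
    if h : ∃ k, x.1 ∈ C k ∧ y.1 ∈ C k then Qinf h.choose x y else 0
  have hW : ∀ k x y, x.1 ∈ C k → y.1 ∈ C k → W x y = Qinf k x y := by
    intro k x y hx hy
    have h : ∃ k, x.1 ∈ C k ∧ y.1 ∈ C k := ⟨k, hx, hy⟩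
    simp only [W, dif_pos h]
    exact hcons _ k x.1 y.1 (Finset.mem_inter.mpr ⟨h.choose_spec.1, hx⟩)
      (Finset.mem_inter.mpr ⟨h.choose_spec.2, hy⟩) x.2 y.2
  obtain ⟨Q, hQ, hQW⟩ := hG.exists_posSemidef_completion W fun s hs => by
    obtain ⟨k, hk⟩ := hcover s hs
    refine ⟨Qinf k, ?_, fun x y hx hy => (hW k x y (hk hx) (hk hy)).symm⟩
    simpa only [conjTranspose_eq_transpose_of_trivial] using
      (hpsd k).conjTranspose_mul_mul_same (hyperIndexMatrix ℝ N (C k))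
  refine ⟨gramPolyMatrix v Q, isSOSMatrix_gramPolyMatrix hv hQ, fun i j hij => ?_⟩
  obtain ⟨k, hk⟩ := hcover {i, j} (by
    rw [Finset.coe_pair, SimpleGraph.isClique_pair]
    exact fun hne => hij.resolve_right hne)
  obtain ⟨p, rfl⟩ : i ∈ Set.range ((C k).orderEmbOfFin rfl) := by
    rw [Finset.range_orderEmbOfFin]; exact hk (by simp)
  obtain ⟨q, rfl⟩ : j ∈ Set.range ((C k).orderEmbOfFin rfl) := by
    rw [Finset.range_orderEmbOfFin]; exact hk (by simp)
  have hPpq := congrFun (congrFun (hgram k) p) q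
  rw [indexMatrix_mul_mul_transpose, idKronV_transpose_mul_map_mul, submatrix_apply] at hPpq
  rw [hPpq]
  simp only [gramPolyMatrix, of_apply]
  refine Finset.sum_congr rfl fun a _ => Finset.sum_congr rfl fun b _ => ?_
  rw [hQW _ _ hij, hW k _ _ (hk (by simp)) (hk (by simp))]
  simp only [Qinf, hyperIndexMatrix_transpose_mul_mul_apply]

end CliqueGram

theorem sos_matrix_chordal_completion_general {r t n d N : ℕ}
    (v : Fin N → MvPolynomial (Fin n) ℝ) (hv : IsMonomialBasis n d v)
    (G : SimpleGraph (Fin r)) (hchordal : IsChordalGraph G)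
    (C : Fin t → Finset (Fin r))
    (hmax : ∀ k, IsMaxClique G (C k))
    (hall : ∀ s : Finset (Fin r), IsMaxClique G s → ∃ k, C k = s)
    (P : Matrix (Fin r) (Fin r) (MvPolynomial (Fin n) ℝ)) :
    (∃ F : Matrix (Fin r) (Fin r) (MvPolynomial (Fin n) ℝ),
      (∃ (s : ℕ) (M : Matrix (Fin s) (Fin r) (MvPolynomial (Fin n) ℝ)),
        (∀ i j, (M i j).totalDegree ≤ d) ∧ F = Mᵀ * M) ∧
      ∀ i j, (G.Adj i j ∨ i = j) → F i j = P i j)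
    ↔
    ((∀ k, ∃ (s : ℕ)
        (M : Matrix (Fin s) (Fin (C k).card) (MvPolynomial (Fin n) ℝ)),
      (∀ i j, (M i j).totalDegree ≤ d) ∧
        indexMatrix (MvPolynomial (Fin n) ℝ) (C k) * P *
          (indexMatrix (MvPolynomial (Fin n) ℝ) (C k))ᵀ = Mᵀ * M) ∧
    (∃ Qk : (k : Fin t) →
        Matrix (Fin (C k).card × Fin N) (Fin (C k).card × Fin N) ℝ,
      (∀ k, (Qk k).PosSemidef) ∧
      (∀ k, indexMatrix (MvPolynomial (Fin n) ℝ) (C k) * P *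
          (indexMatrix (MvPolynomial (Fin n) ℝ) (C k))ᵀ =
        ((idKronV (C k).card v)ᵀ * (Qk k).map (fun a => MvPolynomial.C a) : Matrix _ _ _) *
          idKronV (C k).card v) ∧
      (∀ k l : Fin t, ∀ i j : Fin r,
        i ∈ C k ∩ C l → j ∈ C k ∩ C l → ∀ a b : Fin N,
          ((hyperIndexMatrix ℝ N (C k))ᵀ * Qk k * hyperIndexMatrix ℝ N (C k))
              (i, a) (j, b) =
            ((hyperIndexMatrix ℝ N (C l))ᵀ * Qk l * hyperIndexMatrix ℝ N (C l))
              (i, a) (j, b)))) := by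
  have hclique : ∀ k, ∀ i ∈ C k, ∀ j ∈ C k, G.Adj i j ∨ i = j := fun k i hi j hj =>
    (eq_or_ne i j).elim .inr fun h => .inl ((hmax k).1 hi hj h)
  have hcover : ∀ s : Finset (Fin r), G.IsClique (s : Set (Fin r)) → ∃ k, s ⊆ C k := fun s hs => by
    obtain ⟨T, hsT, hT⟩ := exists_isMaxClique_superset hs
    obtain ⟨k, rfl⟩ := hall T hT
    exact ⟨k, hsT⟩
  constructor
  · rintro ⟨F, hF, hFP⟩
    have hPF : ∀ k, indexMatrix (MvPolynomial (Fin n) ℝ) (C k) * P *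
        (indexMatrix (MvPolynomial (Fin n) ℝ) (C k))ᵀ =
          indexMatrix (MvPolynomial (Fin n) ℝ) (C k) * F *
            (indexMatrix (MvPolynomial (Fin n) ℝ) (C k))ᵀ := fun k => by
      simp only [indexMatrix_mul_mul_transpose]
      exact Matrix.ext fun p q => (hFP _ _ (hclique k _ ((C k).orderEmbOfFin_mem rfl p) _
        ((C k).orderEmbOfFin_mem rfl q))).symm
    obtain ⟨Qk, hpsd, hgram, hcons⟩ := IsSOSMatrix.exists_consistent_clique_gram hv hF C
    refine ⟨fun k => ?_, Qk, hpsd, fun k => (hPF k).trans (hgram k), hcons⟩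
    rw [hPF k, indexMatrix_mul_mul_transpose]
    exact IsSOSMatrix.submatrix hF _
  · rintro ⟨-, Qk, hpsd, hgram, hcons⟩
    exact hchordal.exists_isSOSMatrix_completion hv hcover P Qk hpsd hgram hcons

/-- **SOS matrix completion** (Theorem 4): for a chordal graph `G` on `{1,…,r}` with
maximal cliques `C_1,…,C_t`, a partial symmetric polynomial matrix `P` with pattern
`E` (entries of degree at most `2d`, unspecified entries set to `0`) admits an SOS
completion `F ∈ Σ^r_{n,2d}` with `F_{ij} = P_{ij}` on `E* = E ∪ {(i,i)}` if and only
if (i) every principal submatrix `P_k = E_{C_k} P E_{C_k}ᵀ` is an SOS matrix in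
`Σ^{|C_k|}_{n,2d}`, and (ii) there are PSD Gram matrices `Q_k` of the `P_k` that are
consistent: the inflated matrices `E_{C̃_k}ᵀ Q_k E_{C̃_k}` agree on every overlap
`C̃_k ∩ C̃_l ≠ ∅` of the hyper-cliques. -/
theorem sos_matrix_chordal_completion {r t n d N : ℕ} (hN : N = (n + d).choose d)
    (v : Fin N → MvPolynomial (Fin n) ℝ) (hv : IsMonomialBasis n d v)
    (G : SimpleGraph (Fin r)) (hchordal : IsChordalGraph G)
    (C : Fin t → Finset (Fin r))
    (hmax : ∀ k, IsMaxClique G (C k))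
    (hall : ∀ s : Finset (Fin r), IsMaxClique G s → ∃ k, C k = s)
    (P : Matrix (Fin r) (Fin r) (MvPolynomial (Fin n) ℝ)) (hPsym : P.IsSymm)
    (hPdeg : ∀ i j, (P i j).totalDegree ≤ 2 * d)
    (hPsparse : ∀ i j, ¬ (G.Adj i j ∨ i = j) → P i j = 0) :
    (∃ F : Matrix (Fin r) (Fin r) (MvPolynomial (Fin n) ℝ),
      (∃ (s : ℕ) (M : Matrix (Fin s) (Fin r) (MvPolynomial (Fin n) ℝ)),
        (∀ i j, (M i j).totalDegree ≤ d) ∧ F = Mᵀ * M) ∧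
      ∀ i j, (G.Adj i j ∨ i = j) → F i j = P i j)
    ↔
    ((∀ k, ∃ (s : ℕ)
        (M : Matrix (Fin s) (Fin (C k).card) (MvPolynomial (Fin n) ℝ)),
      (∀ i j, (M i j).totalDegree ≤ d) ∧
        indexMatrix (MvPolynomial (Fin n) ℝ) (C k) * P *
          (indexMatrix (MvPolynomial (Fin n) ℝ) (C k))ᵀ = Mᵀ * M) ∧
    (∃ Qk : (k : Fin t) →
        Matrix (Fin (C k).card × Fin N) (Fin (C k).card × Fin N) ℝ,
      (∀ k, (Qk k).PosSemidef) ∧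
      (∀ k, indexMatrix (MvPolynomial (Fin n) ℝ) (C k) * P *
          (indexMatrix (MvPolynomial (Fin n) ℝ) (C k))ᵀ =
        ((idKronV (C k).card v)ᵀ * (Qk k).map (fun a => MvPolynomial.C a) : Matrix _ _ _) *
          idKronV (C k).card v) ∧
      (∀ k l : Fin t, ∀ i j : Fin r,
        i ∈ C k ∩ C l → j ∈ C k ∩ C l → ∀ a b : Fin N,
          ((hyperIndexMatrix ℝ N (C k))ᵀ * Qk k * hyperIndexMatrix ℝ N (C k))
              (i, a) (j, b) =
            ((hyperIndexMatrix ℝ N (C l))ᵀ * Qk l * hyperIndexMatrix ℝ N (C l))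
              (i, a) (j, b)))) :=
  sos_matrix_chordal_completion_general v hv G hchordal C hmax hall P
end
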